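/- Let λ > 1/2, T > 0, k ≥ e, and let μ, ν : [0, T] → [0, ∞) be continuous functions. Define ψ̆(x, m) := x·exp( m·(ln(1+x))^{2λ} ) for x, m ∈ [0, ∞), and φ(s, x) := (x+k)·exp( μ(s)·(ln(x+k))^{2λ} + ν(s) ). Then for all (s, x) ∈ [0, T] × [0, ∞): ψ̆(x, μ(s)) ≤ φ(s, x); and there exists a constant K > 0 such that for all (s, x) ∈ [0, T] × [0, ∞): φ(s, x) ≤ K·ψ̆(x, μ(s)) + K. -/

import Mathlib

/-- `ψ̆(x, m) = x·exp(m·(ln(1+x))^{2λ})` (the weight in the case `λ > 1/2`). -/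
noncomputable def psiBreve (lam x m : ℝ) : ℝ :=
  x * Real.exp (m * Real.log (1 + x) ^ (2 * lam))

/-!
The lower bound is monotonicity, since `log (1 + x) ≤ log (x + k)`. For the upper bound, convexity
of `t ↦ t ^ p` (`p = 2λ > 1`) gives
`log (x + k) ^ p - log (1 + x) ^ p ≤ p · log (x + k) ^ (p - 1) · (k - 1) / (1 + x)`,
which is bounded in `x` because `log y ^ q ≤ q ^ q · y`. Hence `φ(s, x)` is at most a bounded
multiple of `(x + k) · exp (μ s · log (1 + x) ^ p)`, and `x + k ≤ (1 + k) · x` for `x ≥ 1`, while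
for `x ≤ 1` everything is bounded.
-/

open Real Set

theorem rpow_sub_rpow_le_mul_rpow_mul_sub {a b p : ℝ} (ha : 0 ≤ a) (hab : a ≤ b)
    (hp : 1 ≤ p) : b ^ p - a ^ p ≤ p * b ^ (p - 1) * (b - a) := by
  rcases hab.eq_or_lt with rfl | hlt
  · simp
  have hslope := (convexOn_rpow hp).slope_le_of_hasDerivAt (mem_Ici.2 ha)
    (mem_Ici.2 (ha.trans hlt.le)) hlt (hasDerivAt_rpow_const (Or.inr hp))
  rwa [slope_def_field, div_le_iff₀ (sub_pos.2 hlt)] at hslope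

theorem log_rpow_le_rpow_self_mul {q y : ℝ} (hq : 0 < q) (hy : 1 ≤ y) :
    log y ^ q ≤ q ^ q * y := by
  have hy0 : 0 ≤ y := zero_le_one.trans hy
  have hlog : log y ≤ q * y ^ q⁻¹ := by
    simpa [div_inv_eq_mul, mul_comm] using log_le_rpow_div hy0 (inv_pos.2 hq)
  calc log y ^ q ≤ (q * y ^ q⁻¹) ^ q := rpow_le_rpow (log_nonneg hy) hlog hq.le
    _ = q ^ q * y := by
      rw [mul_rpow hq.le (rpow_nonneg hy0 _), ← rpow_mul hy0, inv_mul_cancel₀ hq.ne', rpow_one]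

theorem log_add_sub_log_one_add_le {k x : ℝ} (hk : 1 ≤ k) (hx : 0 ≤ x) :
    log (x + k) - log (1 + x) ≤ (k - 1) / (1 + x) := by
  have hx1 : 0 < 1 + x := by linarith
  rw [← log_div (by linarith) hx1.ne']
  calc log ((x + k) / (1 + x)) ≤ (x + k) / (1 + x) - 1 := log_le_sub_one_of_pos (by positivity)
    _ = (k - 1) / (1 + x) := by field_simp; ring

theorem log_add_rpow_sub_log_one_add_rpow_le {k p x : ℝ} (hk : 1 ≤ k) (hp : 1 < p)
    (hx : 0 ≤ x) :
    log (x + k) ^ p - log (1 + x) ^ p ≤ p * (p - 1) ^ (p - 1) * k * (k - 1) := by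
  have hx1 : 0 < 1 + x := by linarith
  have hab : log (1 + x) ≤ log (x + k) := log_le_log hx1 (by linarith)
  have hgrowth : log (x + k) ^ (p - 1) ≤ (p - 1) ^ (p - 1) * (x + k) :=
    log_rpow_le_rpow_self_mul (by linarith) (by linarith)
  have hratio : (x + k) * ((k - 1) / (1 + x)) ≤ k * (k - 1) := by
    rw [mul_div_assoc', div_le_iff₀ hx1]
    nlinarith [mul_nonneg (sub_nonneg.2 hk) (mul_nonneg hx (sub_nonneg.2 hk))]
  have hdiff : log (x + k) ^ (p - 1) * (log (x + k) - log (1 + x)) ≤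
      (p - 1) ^ (p - 1) * (k * (k - 1)) :=
    calc log (x + k) ^ (p - 1) * (log (x + k) - log (1 + x))
        ≤ (p - 1) ^ (p - 1) * (x + k) * ((k - 1) / (1 + x)) :=
          mul_le_mul hgrowth (log_add_sub_log_one_add_le hk hx) (sub_nonneg.2 hab) (by positivity)
      _ ≤ (p - 1) ^ (p - 1) * (k * (k - 1)) := by
          rw [mul_assoc]; exact mul_le_mul_of_nonneg_left hratio (by positivity)
  calc log (x + k) ^ p - log (1 + x) ^ p
      ≤ p * (log (x + k) ^ (p - 1) * (log (x + k) - log (1 + x))) := by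
        rw [← mul_assoc]
        exact rpow_sub_rpow_le_mul_rpow_mul_sub (log_nonneg (by linarith)) hab hp.le
    _ ≤ p * ((p - 1) ^ (p - 1) * (k * (k - 1))) := by gcongr
    _ = p * (p - 1) ^ (p - 1) * k * (k - 1) := by ring

theorem add_mul_le_of_monotoneOn {g : ℝ → ℝ} (hg : MonotoneOn g (Ici 0))
    (hg0 : ∀ x, 0 ≤ x → 0 ≤ g x) {k x : ℝ} (hk : 0 ≤ k) (hx : 0 ≤ x) :
    (x + k) * g x ≤ (1 + k) * (x * g x) + (1 + k) * g 1 := by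
  have hgx := hg0 x hx
  rcases le_total 1 x with h1 | h1
  · nlinarith [mul_nonneg (mul_nonneg hk (sub_nonneg.2 h1)) hgx, hg0 1 zero_le_one]
  · have hg1 := hg (mem_Ici.2 hx) (mem_Ici.2 zero_le_one) h1
    nlinarith [mul_le_mul (by linarith : x + k ≤ 1 + k) hg1 hgx (by linarith),
      mul_nonneg (mul_nonneg (by linarith : (0 : ℝ) ≤ 1 + k) hx) hgx]

theorem psiBreve_le {lam k m n x : ℝ} (hlam : 0 ≤ lam) (hk : 1 ≤ k) (hm : 0 ≤ m) (hn : 0 ≤ n)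
    (hx : 0 ≤ x) : psiBreve lam x m ≤ (x + k) * exp (m * log (x + k) ^ (2 * lam) + n) := by
  have hlog : log (1 + x) ^ (2 * lam) ≤ log (x + k) ^ (2 * lam) :=
    rpow_le_rpow (log_nonneg (by linarith)) (log_le_log (by linarith) (by linarith)) (by linarith)
  unfold psiBreve
  gcongr
  · linarith
  · nlinarith [mul_le_mul_of_nonneg_left hlog hm]

theorem exists_add_mul_exp_le_mul_psiBreve_add {lam k : ℝ} (hlam : 1 / 2 < lam) (hk : 1 ≤ k)
    (M N : ℝ) : ∃ K, 0 < K ∧ ∀ m, 0 ≤ m → m ≤ M → ∀ n, n ≤ N → ∀ x, 0 ≤ x →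
      (x + k) * exp (m * log (x + k) ^ (2 * lam) + n) ≤ K * psiBreve lam x m + K := by
  set p := 2 * lam
  have hp : 1 < p := by linarith
  set C := p * (p - 1) ^ (p - 1) * k * (k - 1)
  have hC : 0 ≤ C := by
    have : 0 ≤ (p - 1) ^ (p - 1) := rpow_nonneg (by linarith) _
    have : 0 ≤ k - 1 := by linarith
    positivity
  set E := exp (M * C + N)
  set L := exp (M * log 2 ^ p)
  refine ⟨(1 + k) * E * L, by positivity, fun m hm hmM n hnN x hx => ?_⟩
  set g := fun y => exp (m * log (1 + y) ^ p)
  have hshift : (x + k) * exp (m * log (x + k) ^ p + n) ≤ E * ((x + k) * g x) := by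
    have hgap := log_add_rpow_sub_log_one_add_rpow_le hk hp hx
    have hexp : m * log (x + k) ^ p + n ≤ (M * C + N) + m * log (1 + x) ^ p := by
      nlinarith [mul_le_mul_of_nonneg_left hgap hm, mul_le_mul_of_nonneg_right hmM hC]
    calc (x + k) * exp (m * log (x + k) ^ p + n)
        ≤ (x + k) * (E * g x) := by rw [← exp_add]; gcongr
      _ = E * ((x + k) * g x) := by ring
  have hg : MonotoneOn g (Ici 0) := fun y (hy : 0 ≤ y) z _ hyz =>
    exp_le_exp.2 <| mul_le_mul_of_nonneg_left (rpow_le_rpow (log_nonneg (by linarith))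
      (log_le_log (by linarith) (by linarith)) (by linarith)) hm
  have hsplit :=
    add_mul_le_of_monotoneOn hg (fun _ _ => (exp_pos _).le) (by linarith : (0 : ℝ) ≤ k) hx
  have hg1 : g 1 ≤ L := by
    simp only [g, L, show (1 : ℝ) + 1 = 2 by norm_num]
    exact exp_le_exp.2 (mul_le_mul_of_nonneg_right hmM (rpow_nonneg (log_nonneg one_le_two) _))
  have hL : 1 ≤ L := one_le_exp (mul_nonneg (hm.trans hmM) (rpow_nonneg (log_nonneg one_le_two) _))
  have hψ : 0 ≤ psiBreve lam x m := mul_nonneg hx (exp_pos _).le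
  have hcoef : 0 ≤ (1 + k) * E := by positivity
  calc (x + k) * exp (m * log (x + k) ^ p + n)
      ≤ E * ((x + k) * g x) := hshift
    _ ≤ E * ((1 + k) * psiBreve lam x m + (1 + k) * g 1) :=
        mul_le_mul_of_nonneg_left hsplit (exp_pos _).le
    _ ≤ (1 + k) * E * L * psiBreve lam x m + (1 + k) * E * L := by
        nlinarith [mul_le_mul_of_nonneg_left hL (mul_nonneg hcoef hψ),
          mul_le_mul_of_nonneg_left hg1 hcoef]

theorem stmt_15_general (lam T k : ℝ) (hlam : 1 / 2 < lam)
    (hk : Real.exp 1 ≤ k)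
    (μ ν : ℝ → ℝ)
    (hμc : ContinuousOn μ (Set.Icc 0 T)) (hμnn : ∀ s ∈ Set.Icc 0 T, 0 ≤ μ s)
    (hνc : ContinuousOn ν (Set.Icc 0 T)) (hνnn : ∀ s ∈ Set.Icc 0 T, 0 ≤ ν s)
    (φ : ℝ → ℝ → ℝ)
    (hφ : ∀ s x, φ s x =
      (x + k) * Real.exp (μ s * Real.log (x + k) ^ (2 * lam) + ν s)) :
    (∀ s ∈ Set.Icc 0 T, ∀ x : ℝ, 0 ≤ x → psiBreve lam x (μ s) ≤ φ s x) ∧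
    ∃ K : ℝ, 0 < K ∧ ∀ s ∈ Set.Icc 0 T, ∀ x : ℝ, 0 ≤ x →
      φ s x ≤ K * psiBreve lam x (μ s) + K := by
  have hk1 : 1 ≤ k := (one_le_exp zero_le_one).trans hk
  obtain ⟨M, hM⟩ := isCompact_Icc.exists_bound_of_continuousOn hμc
  obtain ⟨N, hN⟩ := isCompact_Icc.exists_bound_of_continuousOn hνc
  obtain ⟨K, hK, hbound⟩ := exists_add_mul_exp_le_mul_psiBreve_add hlam hk1 M N
  refine ⟨fun s hs x hx => ?_, K, hK, fun s hs x hx => ?_⟩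
  · rw [hφ]
    exact psiBreve_le (by linarith) hk1 (hμnn s hs) (hνnn s hs) hx
  · rw [hφ]
    exact hbound _ (hμnn s hs) ((le_abs_self _).trans (hM s hs)) _
      ((le_abs_self _).trans (hN s hs)) x hx

/-- Proposition 6.3: for `λ > 1/2`, `T > 0`, `k ≥ e` and continuous nonnegative `μ, ν` on
`[0,T]`, the function `φ(s,x) = (x+k)·exp(μ(s)·(ln(x+k))^{2λ} + ν(s))` satisfies
`ψ̆(x, μ(s)) ≤ φ(s, x) ≤ K·ψ̆(x, μ(s)) + K` for some constant `K > 0`. -/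
theorem stmt_15 (lam T k : ℝ) (hlam : 1 / 2 < lam) (hT : 0 < T)
    (hk : Real.exp 1 ≤ k)
    (μ ν : ℝ → ℝ)
    (hμc : ContinuousOn μ (Set.Icc 0 T)) (hμnn : ∀ s ∈ Set.Icc 0 T, 0 ≤ μ s)
    (hνc : ContinuousOn ν (Set.Icc 0 T)) (hνnn : ∀ s ∈ Set.Icc 0 T, 0 ≤ ν s)
    (φ : ℝ → ℝ → ℝ)
    (hφ : ∀ s x, φ s x =
      (x + k) * Real.exp (μ s * Real.log (x + k) ^ (2 * lam) + ν s)) :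
    (∀ s ∈ Set.Icc 0 T, ∀ x : ℝ, 0 ≤ x → psiBreve lam x (μ s) ≤ φ s x) ∧
    ∃ K : ℝ, 0 < K ∧ ∀ s ∈ Set.Icc 0 T, ∀ x : ℝ, 0 ≤ x →
      φ s x ≤ K * psiBreve lam x (μ s) + K :=
  stmt_15_general lam T k hlam hk μ ν hμc hμnn hνc hνnn φ hφ
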